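/- If V(S,P) is the Ohmic-drop voltage (OCV + √(OCV² − 4PR₀))/2 where OCV is constant, then for P ∈ [0, P_max] with P_max < OCV²/(4R₀), the function P ↦ 1/V(S,P) is convex and increasing in P. -/

import Mathlib

/-!
The Ohmic-drop voltage is positive, antitone in `P` (as `R₀ ≥ 0`) and concave in `P` (it is an
affine function of the square root of an affine function of `P`). Since `t ↦ t⁻¹` is convex and
antitone on `(0, ∞)`, the reciprocal of a positive concave function is convex, and the reciprocal
of a positive antitone function is monotone.
-/

open Real Set

lemma ConcaveOn.convexOn_inv {𝕜 E : Type*} [Field 𝕜] [LinearOrder 𝕜] [IsStrictOrderedRing 𝕜]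
    [AddCommMonoid E] [Module 𝕜 E] {s : Set E} {f : E → 𝕜}
    (hf : ConcaveOn 𝕜 s f) (hpos : ∀ x ∈ s, 0 < f x) : ConvexOn 𝕜 s fun x ↦ (f x)⁻¹ := by
  have hinv : ConvexOn 𝕜 (Ioi 0) fun t : 𝕜 ↦ t⁻¹ := by simpa using convexOn_zpow (𝕜 := 𝕜) (-1)
  refine ⟨hf.1, fun x hx y hy a b ha hb hab ↦ ?_⟩
  have hcomb : 0 < a • f x + b • f y := (convex_Ioi 0) (hpos x hx) (hpos y hy) ha hb hab
  calc (f (a • x + b • y))⁻¹ ≤ (a • f x + b • f y)⁻¹ := inv_anti₀ hcomb (hf.2 hx hy ha hb hab)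
    _ ≤ a • (f x)⁻¹ + b • (f y)⁻¹ := hinv.2 (hpos x hx) (hpos y hy) ha hb hab

lemma AntitoneOn.monotoneOn_inv {α 𝕜 : Type*} [Preorder α] [Field 𝕜] [LinearOrder 𝕜]
    [IsStrictOrderedRing 𝕜] {s : Set α} {f : α → 𝕜}
    (hf : AntitoneOn f s) (hpos : ∀ x ∈ s, 0 < f x) : MonotoneOn (fun x ↦ (f x)⁻¹) s :=
  fun _ hx _ hy hxy ↦ inv_anti₀ (hpos _ hy) (hf hx hy hxy)

noncomputable def ohmicVoltage (OCV R₀ P : ℝ) : ℝ := (OCV + √(OCV ^ 2 - 4 * P * R₀)) / 2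

lemma ohmicVoltage_pos {OCV : ℝ} (hOCV : 0 < OCV) (R₀ P : ℝ) : 0 < ohmicVoltage OCV R₀ P := by
  unfold ohmicVoltage; positivity

lemma antitone_ohmicVoltage (OCV : ℝ) {R₀ : ℝ} (hR : 0 ≤ R₀) : Antitone (ohmicVoltage OCV R₀) := by
  intro P Q hPQ
  unfold ohmicVoltage
  gcongr

lemma concaveOn_ohmicVoltage (OCV R₀ : ℝ) :
    ConcaveOn ℝ {P | 4 * P * R₀ ≤ OCV ^ 2} (ohmicVoltage OCV R₀) := by
  let g : ℝ →ᵃ[ℝ] ℝ := (-(4 * R₀)) • AffineMap.id ℝ ℝ + AffineMap.const ℝ ℝ (OCV ^ 2)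
  have hg : ∀ P, g P = OCV ^ 2 - 4 * P * R₀ := fun P ↦ by
    change -(4 * R₀) * P + OCV ^ 2 = _; ring
  have hset : g ⁻¹' Ici 0 = {P | 4 * P * R₀ ≤ OCV ^ 2} := by
    ext P; simp only [mem_preimage, mem_Ici, mem_ofPred_eq, hg, sub_nonneg]
  have hsqrt := strictConcaveOn_sqrt.concaveOn.comp_affineMap g
  rw [hset] at hsqrt
  refine ((hsqrt.add_const OCV).smul (by norm_num : (0 : ℝ) ≤ 1 / 2)).congr fun P _ ↦ ?_
  simp only [ohmicVoltage, Pi.add_apply, Function.comp_apply, hg, smul_eq_mul]; ring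

theorem stmt_7_general (OCV R₀ Pmax : ℝ) (hOCV : 0 < OCV) (hR : 0 < R₀)
    (hPmax' : Pmax < OCV ^ 2 / (4 * R₀)) :
    let f := fun P : ℝ => 1 / ((OCV + Real.sqrt (OCV ^ 2 - 4 * P * R₀)) / 2)
    ConvexOn ℝ (Set.Icc 0 Pmax) f ∧ MonotoneOn f (Set.Icc 0 Pmax) := by
  intro f
  have hf : f = fun P ↦ (ohmicVoltage OCV R₀ P)⁻¹ := by simp only [f, ohmicVoltage, one_div]
  have hsub : Icc 0 Pmax ⊆ {P | 4 * P * R₀ ≤ OCV ^ 2} := fun P hP ↦ by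
    have := (lt_div_iff₀ (by positivity)).mp hPmax'
    simp only [mem_ofPred_eq]; nlinarith [hP.2]
  have hpos : ∀ P ∈ Icc 0 Pmax, 0 < ohmicVoltage OCV R₀ P := fun P _ ↦ ohmicVoltage_pos hOCV R₀ P
  rw [hf]
  exact ⟨((concaveOn_ohmicVoltage OCV R₀).subset hsub (convex_Icc 0 Pmax)).convexOn_inv hpos,
    ((antitone_ohmicVoltage OCV hR.le).antitoneOn _).monotoneOn_inv hpos⟩

theorem stmt_7 (OCV R₀ Pmax : ℝ) (hOCV : 0 < OCV) (hR : 0 < R₀)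
    (hPmax : 0 ≤ Pmax) (hPmax' : Pmax < OCV ^ 2 / (4 * R₀)) :
    let f := fun P : ℝ => 1 / ((OCV + Real.sqrt (OCV ^ 2 - 4 * P * R₀)) / 2)
    ConvexOn ℝ (Set.Icc 0 Pmax) f ∧ MonotoneOn f (Set.Icc 0 Pmax) :=
  stmt_7_general OCV R₀ Pmax hOCV hR hPmax'
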